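/- arXiv:2303.16454 — 2 statements merged into one kernel-verified Lean document; each statement's English description precedes it below -/
import Mathlib

section
/- Let d, L_σ, W_σ ∈ ℕ with L_σ ≥ 1 and let R_σ ≥ 1. Let σ_κ, σ_{κ̃} : ℝ^d → ℝ^d be two vector fields whose d components are realizations of tanh neural networks with a common architecture of depth L_σ and width at most W_σ, with parameter vectors κ, κ̃ each bounded by R_σ in the ℓ∞ norm. Let f be a function on a set Ω ⊆ { x ∈ ℝ^d : ‖x‖_{ℓ∞} ≤ 1 } with |f(x)| ≤ c_f for all x ∈ Ω. Then for every x ∈ Ω, | (∇·σ_κ(x) + f(x))² − (∇·σ_{κ̃}(x) + f(x))² | ≤ Λ_σ ‖κ − κ̃‖_{ℓ∞}, where Λ_σ = 2 ( d R_σ^{L_σ} W_σ^{L_σ − 1} + c_f ) · d L_σ² R_σ^{2L_σ − 2} W_σ^{2L_σ − 2}. -/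
open Real

lemma tanh_hasDerivAt (x : ℝ) : HasDerivAt Real.tanh (1 - Real.tanh x ^ 2) x := by
  have hc := Real.cosh_pos x
  have h : HasDerivAt (fun y => Real.sinh y / Real.cosh y)
      ((Real.cosh x * Real.cosh x - Real.sinh x * Real.sinh x) / Real.cosh x ^ 2) x :=
    (Real.hasDerivAt_sinh x).div (Real.hasDerivAt_cosh x) hc.ne'
  have he : (fun y => Real.sinh y / Real.cosh y) = Real.tanh := by
    funext y; rw [Real.tanh_eq_sinh_div_cosh]
  rw [he] at h
  convert h using 1
  rw [Real.tanh_eq_sinh_div_cosh]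
  have h1 := Real.cosh_sq_sub_sinh_sq x
  field_simp

lemma abs_tanh_le_one (x : ℝ) : |Real.tanh x| ≤ 1 := by
  have hc := Real.cosh_pos x
  have h1 := Real.cosh_sq_sub_sinh_sq x
  rw [Real.tanh_eq_sinh_div_cosh, abs_div, abs_of_pos hc, div_le_one hc]
  nlinarith [abs_nonneg (Real.sinh x), sq_abs (Real.sinh x), abs_nonneg (Real.sinh x)]

lemma tanh_deriv_abs_le_one (x : ℝ) : |1 - Real.tanh x ^ 2| ≤ 1 := by
  have h := abs_tanh_le_one x
  have := abs_nonneg (Real.tanh x)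
  rw [abs_le]; constructor <;> nlinarith [sq_abs (Real.tanh x)]

lemma tanh_lipschitz (a c : ℝ) : |Real.tanh a - Real.tanh c| ≤ |a - c| := by
  have hd : Differentiable ℝ Real.tanh := fun x => (tanh_hasDerivAt x).differentiableAt
  have hl : LipschitzWith 1 Real.tanh := by
    apply lipschitzWith_of_nnnorm_deriv_le hd
    intro x
    rw [(tanh_hasDerivAt x).deriv]
    rw [← NNReal.coe_le_coe]
    push_cast
    simpa [Real.norm_eq_abs] using tanh_deriv_abs_le_one x
  simpa [Real.dist_eq] using hl.dist_le_mul a c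

lemma tanh_deriv_lipschitz (a c : ℝ) :
    |(1 - Real.tanh a ^ 2) - (1 - Real.tanh c ^ 2)| ≤ |a - c| := by
  set f : ℝ → ℝ := fun y => 1 - Real.tanh y ^ 2 with hf
  have hder : ∀ y : ℝ, HasDerivAt f (-(2 * Real.tanh y * (1 - Real.tanh y ^ 2))) y := by
    intro y
    have h1 : HasDerivAt (fun y => Real.tanh y ^ 2)
        (2 * Real.tanh y * (1 - Real.tanh y ^ 2)) y := by
      have : HasDerivAt (fun y => Real.tanh y ^ 2)
          (((2 : ℕ) : ℝ) * Real.tanh y ^ (2 - 1) * (1 - Real.tanh y ^ 2)) y :=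
        (tanh_hasDerivAt y).fun_pow 2
      convert this using 1; ring
    simpa [hf] using (h1.const_sub 1)
  have hd : Differentiable ℝ f := fun y => (hder y).differentiableAt
  have hl : LipschitzWith 1 f := by
    apply lipschitzWith_of_nnnorm_deriv_le hd
    intro y
    rw [(hder y).deriv, ← NNReal.coe_le_coe]
    push_cast
    rw [Real.norm_eq_abs, abs_neg]
    have ht := abs_tanh_le_one y
    have h2 : |2 * Real.tanh y * (1 - Real.tanh y ^ 2)| =
        2 * |Real.tanh y| * |1 - Real.tanh y ^ 2| := by
      rw [abs_mul, abs_mul]; norm_num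
    rw [h2]
    have habs : |1 - Real.tanh y ^ 2| = 1 - Real.tanh y ^ 2 := by
      rw [abs_of_nonneg]; nlinarith [sq_abs (Real.tanh y), abs_nonneg (Real.tanh y)]
    rw [habs]
    nlinarith [sq_abs (Real.tanh y), abs_nonneg (Real.tanh y),
      mul_nonneg (abs_nonneg (Real.tanh y)) (sq_nonneg (2 * |Real.tanh y| - 1)),
      sq_nonneg (|Real.tanh y| - 5/8)]
  have h := hl.dist_le_mul a c
  rw [Real.dist_eq, Real.dist_eq, NNReal.coe_one, one_mul] at h
  exact h

noncomputable def nnHidden (dims : ℕ → ℕ)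
    (A : ∀ ℓ : ℕ, Matrix (Fin (dims (ℓ + 1))) (Fin (dims ℓ)) ℝ)
    (b : ∀ ℓ : ℕ, Fin (dims (ℓ + 1)) → ℝ)
    (x : Fin (dims 0) → ℝ) : (ℓ : ℕ) → Fin (dims ℓ) → ℝ
  | 0 => x
  | ℓ + 1 => fun i => Real.tanh ((∑ j, A ℓ i j * nnHidden dims A b x ℓ j) + b ℓ i)

noncomputable def nnRealize (dims : ℕ → ℕ) (L : ℕ)
    (A : ∀ ℓ : ℕ, Matrix (Fin (dims (ℓ + 1))) (Fin (dims ℓ)) ℝ)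
    (b : ∀ ℓ : ℕ, Fin (dims (ℓ + 1)) → ℝ)
    (x : Fin (dims 0) → ℝ) : Fin (dims L) → ℝ :=
  match L with
  | 0 => x
  | m + 1 => fun i => (∑ j, A m i j * nnHidden dims A b x m j) + b m i

/-- pre-activation -/
noncomputable def nnZ (dims : ℕ → ℕ)
    (A : ∀ ℓ : ℕ, Matrix (Fin (dims (ℓ + 1))) (Fin (dims ℓ)) ℝ)
    (b : ∀ ℓ : ℕ, Fin (dims (ℓ + 1)) → ℝ)
    (x : Fin (dims 0) → ℝ) (ℓ : ℕ) (p : Fin (dims (ℓ + 1))) : ℝ :=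
  (∑ j, A ℓ p j * nnHidden dims A b x ℓ j) + b ℓ p

/-- directional derivative of the hidden layers along direction w -/
noncomputable def nnG (dims : ℕ → ℕ)
    (A : ∀ ℓ : ℕ, Matrix (Fin (dims (ℓ + 1))) (Fin (dims ℓ)) ℝ)
    (b : ∀ ℓ : ℕ, Fin (dims (ℓ + 1)) → ℝ)
    (x w : Fin (dims 0) → ℝ) : (ℓ : ℕ) → Fin (dims ℓ) → ℝ
  | 0 => w
  | ℓ + 1 => fun p =>
      (1 - Real.tanh (nnZ dims A b x ℓ p) ^ 2) * ∑ j, A ℓ p j * nnG dims A b x w ℓ j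

noncomputable def nnS (dims : ℕ → ℕ)
    (A : ∀ ℓ : ℕ, Matrix (Fin (dims (ℓ + 1))) (Fin (dims ℓ)) ℝ)
    (b : ∀ ℓ : ℕ, Fin (dims (ℓ + 1)) → ℝ)
    (x w : Fin (dims 0) → ℝ) (ℓ : ℕ) (p : Fin (dims (ℓ + 1))) : ℝ :=
  ∑ j, A ℓ p j * nnG dims A b x w ℓ j

lemma nnHidden_succ (dims : ℕ → ℕ) (A : ∀ ℓ : ℕ, Matrix (Fin (dims (ℓ + 1))) (Fin (dims ℓ)) ℝ)
    (b : ∀ ℓ : ℕ, Fin (dims (ℓ + 1)) → ℝ) (x : Fin (dims 0) → ℝ) (ℓ : ℕ)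
    (p : Fin (dims (ℓ + 1))) :
    nnHidden dims A b x (ℓ + 1) p = Real.tanh (nnZ dims A b x ℓ p) := rfl

lemma nnG_succ (dims : ℕ → ℕ) (A : ∀ ℓ : ℕ, Matrix (Fin (dims (ℓ + 1))) (Fin (dims ℓ)) ℝ)
    (b : ∀ ℓ : ℕ, Fin (dims (ℓ + 1)) → ℝ) (x w : Fin (dims 0) → ℝ) (ℓ : ℕ)
    (p : Fin (dims (ℓ + 1))) :
    nnG dims A b x w (ℓ + 1) p
      = (1 - Real.tanh (nnZ dims A b x ℓ p) ^ 2) * nnS dims A b x w ℓ p := rfl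

lemma abs_sum_le_card_mul {n : ℕ} {f : Fin n → ℝ} {C : ℝ} (h : ∀ j, |f j| ≤ C) :
    |∑ j, f j| ≤ (n : ℝ) * C := by
  calc |∑ j, f j| ≤ ∑ j, |f j| := Finset.abs_sum_le_sum_abs _ _
    _ ≤ ∑ _j : Fin n, C := Finset.sum_le_sum fun j _ => h j
    _ = (n : ℝ) * C := by simp [Finset.sum_const, Finset.card_univ, nsmul_eq_mul]

lemma tanh_differentiable : Differentiable ℝ Real.tanh :=
  fun x => (tanh_hasDerivAt x).differentiableAt

lemma nnHidden_differentiable (dims : ℕ → ℕ)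
    (A : ∀ ℓ : ℕ, Matrix (Fin (dims (ℓ + 1))) (Fin (dims ℓ)) ℝ)
    (b : ∀ ℓ : ℕ, Fin (dims (ℓ + 1)) → ℝ) :
    ∀ ℓ (p : Fin (dims ℓ)), Differentiable ℝ fun y : Fin (dims 0) → ℝ => nnHidden dims A b y ℓ p := by
  intro ℓ
  induction ℓ with
  | zero =>
    intro p
    exact differentiable_pi.mp differentiable_id p
  | succ ℓ ih =>
    intro p
    have h1 : Differentiable ℝ fun y : Fin (dims 0) → ℝ =>
        (∑ j, A ℓ p j * nnHidden dims A b y ℓ j) + b ℓ p :=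
      (Differentiable.fun_sum fun j _ => (ih j).const_mul _).add_const _
    exact tanh_differentiable.comp h1

lemma nnHidden_path_hasDerivAt (dims : ℕ → ℕ)
    (A : ∀ ℓ : ℕ, Matrix (Fin (dims (ℓ + 1))) (Fin (dims ℓ)) ℝ)
    (b : ∀ ℓ : ℕ, Fin (dims (ℓ + 1)) → ℝ) (x w : Fin (dims 0) → ℝ) :
    ∀ ℓ (p : Fin (dims ℓ)),
      HasDerivAt (fun t : ℝ => nnHidden dims A b (fun j => x j + t * w j) ℓ p)
        (nnG dims A b x w ℓ p) 0 := by
  intro ℓ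
  induction ℓ with
  | zero =>
    intro p
    show HasDerivAt (fun t : ℝ => x p + t * w p) (w p) 0
    exact (hasDerivAt_mul_const (w p)).const_add (x p)
  | succ ℓ ih =>
    intro p
    have hin : HasDerivAt (fun t : ℝ =>
        (∑ j, A ℓ p j * nnHidden dims A b (fun j' => x j' + t * w j') ℓ j) + b ℓ p)
        (∑ j, A ℓ p j * nnG dims A b x w ℓ j) 0 :=
      (HasDerivAt.fun_sum fun j _ => (ih j).const_mul (A ℓ p j)).add_const _
    have hcomp := (tanh_hasDerivAt _).comp 0 hin
    have hz0 : (fun j => x j + (0 : ℝ) * w j) = x := by funext j; ring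
    simpa [Function.comp_def, nnHidden, nnG, nnZ, hz0] using hcomp

lemma nnHidden_abs_le (dims : ℕ → ℕ)
    (A : ∀ ℓ : ℕ, Matrix (Fin (dims (ℓ + 1))) (Fin (dims ℓ)) ℝ)
    (b : ∀ ℓ : ℕ, Fin (dims (ℓ + 1)) → ℝ) (x : Fin (dims 0) → ℝ)
    (hx : ∀ j, |x j| ≤ 1) :
    ∀ ℓ (p : Fin (dims ℓ)), |nnHidden dims A b x ℓ p| ≤ 1 := by
  intro ℓ
  cases ℓ with
  | zero => exact hx
  | succ ℓ => intro p; rw [nnHidden_succ]; exact abs_tanh_le_one _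
section Bounds

variable (dims : ℕ → ℕ) (L W : ℕ) (R ε : ℝ)
variable (A A' : ∀ ℓ : ℕ, Matrix (Fin (dims (ℓ + 1))) (Fin (dims ℓ)) ℝ)
variable (b b' : ∀ ℓ : ℕ, Fin (dims (ℓ + 1)) → ℝ)
variable (x : Fin (dims 0) → ℝ) (i' : Fin (dims 0))

lemma nnS_bound (hR : 1 ≤ R) (hdims : ∀ ℓ ≤ L, dims ℓ ≤ W)
    (hA : ∀ ℓ < L, ∀ p r, |A ℓ p r| ≤ R) :
    ∀ ℓ, ℓ < L → ∀ p, |nnS dims A b x (Pi.single i' 1) ℓ p| ≤ R ^ (ℓ + 1) * (W : ℝ) ^ ℓ := by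
  have hR0 : (0 : ℝ) ≤ R := le_trans zero_le_one hR
  intro ℓ
  induction ℓ with
  | zero =>
    intro hℓ p
    have : nnS dims A b x (Pi.single i' 1) 0 p = A 0 p i' := by
      simp [nnS, nnG, Pi.single_apply, mul_ite, Finset.sum_ite_eq']
    rw [this]
    simpa using hA 0 hℓ p i'
  | succ ℓ ih =>
    intro hℓ p
    have hℓ' : ℓ < L := Nat.lt_of_succ_lt hℓ
    have hG : ∀ j : Fin (dims (ℓ + 1)),
        |nnG dims A b x (Pi.single i' 1) (ℓ + 1) j| ≤ R ^ (ℓ + 1) * (W : ℝ) ^ ℓ := by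
      intro j
      rw [nnG_succ, abs_mul]
      calc |1 - Real.tanh (nnZ dims A b x ℓ j) ^ 2| * |nnS dims A b x (Pi.single i' 1) ℓ j|
          ≤ 1 * (R ^ (ℓ + 1) * (W : ℝ) ^ ℓ) :=
            mul_le_mul (tanh_deriv_abs_le_one _) (ih hℓ' j) (abs_nonneg _)
              zero_le_one
        _ = R ^ (ℓ + 1) * (W : ℝ) ^ ℓ := one_mul _
    have hterm : ∀ j : Fin (dims (ℓ + 1)),
        |A (ℓ + 1) p j * nnG dims A b x (Pi.single i' 1) (ℓ + 1) j|
          ≤ R * (R ^ (ℓ + 1) * (W : ℝ) ^ ℓ) := by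
      intro j
      rw [abs_mul]
      exact mul_le_mul (hA _ hℓ p j) (hG j) (abs_nonneg _) hR0
    calc |nnS dims A b x (Pi.single i' 1) (ℓ + 1) p|
        ≤ (dims (ℓ + 1) : ℝ) * (R * (R ^ (ℓ + 1) * (W : ℝ) ^ ℓ)) :=
          abs_sum_le_card_mul hterm
      _ ≤ (W : ℝ) * (R * (R ^ (ℓ + 1) * (W : ℝ) ^ ℓ)) := by
          apply mul_le_mul_of_nonneg_right
          · exact_mod_cast hdims (ℓ + 1) (le_of_lt hℓ)
          · positivity
      _ = R ^ (ℓ + 1 + 1) * (W : ℝ) ^ (ℓ + 1) := by ring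

lemma nnZ_diff_step (hR : 1 ≤ R) (hW1 : 1 ≤ W) (hε : 0 ≤ ε)
    (hdims : ∀ ℓ ≤ L, dims ℓ ≤ W)
    (hA : ∀ ℓ < L, ∀ p r, |A ℓ p r| ≤ R)
    (hdA : ∀ ℓ < L, ∀ p r, |A ℓ p r - A' ℓ p r| ≤ ε)
    (hdb : ∀ ℓ < L, ∀ p, |b ℓ p - b' ℓ p| ≤ ε)
    (hx : ∀ j, |x j| ≤ 1)
    (ℓ : ℕ) (hℓ : ℓ < L)
    (hu : ∀ q : Fin (dims ℓ), R * |nnHidden dims A b x ℓ q - nnHidden dims A' b' x ℓ q|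
      ≤ 2 * (ℓ : ℝ) * ((W : ℝ) * R) ^ ℓ * ε) :
    ∀ p, R * |nnZ dims A b x ℓ p - nnZ dims A' b' x ℓ p|
      ≤ (2 * (ℓ : ℝ) + 2) * ((W : ℝ) * R) ^ (ℓ + 1) * ε := by
  intro p
  have hR0 : (0 : ℝ) ≤ R := le_trans zero_le_one hR
  have hW0 : (1 : ℝ) ≤ (W : ℝ) := by exact_mod_cast hW1
  have hWR : (1 : ℝ) ≤ (W : ℝ) * R := le_trans hR (le_mul_of_one_le_left hR0 hW0)
  have hP : (1 : ℝ) ≤ ((W : ℝ) * R) ^ ℓ := one_le_pow₀ hWR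
  set C : ℝ := 2 * (ℓ : ℝ) * ((W : ℝ) * R) ^ ℓ * ε + ε with hC
  have hC0 : 0 ≤ C := by positivity
  have hterm : ∀ j : Fin (dims ℓ),
      |A ℓ p j * nnHidden dims A b x ℓ j - A' ℓ p j * nnHidden dims A' b' x ℓ j| ≤ C := by
    intro j
    have h1 : A ℓ p j * nnHidden dims A b x ℓ j - A' ℓ p j * nnHidden dims A' b' x ℓ j
        = A ℓ p j * (nnHidden dims A b x ℓ j - nnHidden dims A' b' x ℓ j)
          + (A ℓ p j - A' ℓ p j) * nnHidden dims A' b' x ℓ j := by ring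
    rw [h1]
    calc |A ℓ p j * (nnHidden dims A b x ℓ j - nnHidden dims A' b' x ℓ j)
          + (A ℓ p j - A' ℓ p j) * nnHidden dims A' b' x ℓ j|
        ≤ |A ℓ p j| * |nnHidden dims A b x ℓ j - nnHidden dims A' b' x ℓ j|
          + |A ℓ p j - A' ℓ p j| * |nnHidden dims A' b' x ℓ j| := by
          refine le_trans (abs_add_le _ _) ?_
          rw [abs_mul, abs_mul]
      _ ≤ R * |nnHidden dims A b x ℓ j - nnHidden dims A' b' x ℓ j| + ε * 1 := by
          gcongr
          · exact hA ℓ hℓ p j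
          · exact hdA ℓ hℓ p j
          · exact nnHidden_abs_le dims A' b' x hx ℓ j
      _ ≤ 2 * (ℓ : ℝ) * ((W : ℝ) * R) ^ ℓ * ε + ε := by
          rw [mul_one]
          exact add_le_add_left (hu j) ε
  have hsum : |∑ j, (A ℓ p j * nnHidden dims A b x ℓ j - A' ℓ p j * nnHidden dims A' b' x ℓ j)|
      ≤ (W : ℝ) * C := by
    refine le_trans (abs_sum_le_card_mul hterm) ?_
    apply mul_le_mul_of_nonneg_right _ hC0
    exact_mod_cast hdims ℓ (le_of_lt hℓ)
  have hz : |nnZ dims A b x ℓ p - nnZ dims A' b' x ℓ p| ≤ (W : ℝ) * C + ε := by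
    have h2 : nnZ dims A b x ℓ p - nnZ dims A' b' x ℓ p
        = (∑ j, (A ℓ p j * nnHidden dims A b x ℓ j - A' ℓ p j * nnHidden dims A' b' x ℓ j))
          + (b ℓ p - b' ℓ p) := by
      simp [nnZ, Finset.sum_sub_distrib]
      ring
    rw [h2]
    exact le_trans (abs_add_le _ _) (add_le_add hsum (hdb ℓ hℓ p))
  calc R * |nnZ dims A b x ℓ p - nnZ dims A' b' x ℓ p| ≤ R * ((W : ℝ) * C + ε) := by
        exact mul_le_mul_of_nonneg_left hz hR0
    _ ≤ (2 * (ℓ : ℝ) + 2) * ((W : ℝ) * R) ^ (ℓ + 1) * ε := by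
        rw [hC, pow_succ]
        have e1 : R * ε ≤ (W : ℝ) * R * ε :=
          mul_le_mul_of_nonneg_right (le_mul_of_one_le_left hR0 hW0) hε
        have e2 : (W : ℝ) * R * ε ≤ ((W : ℝ) * R) ^ ℓ * ((W : ℝ) * R) * ε := by
          have := le_mul_of_one_le_left (mul_nonneg (le_trans zero_le_one hW0) hR0) hP
          exact mul_le_mul_of_nonneg_right this hε
        nlinarith [mul_nonneg (mul_nonneg (le_trans zero_le_one hW0) hR0) hε,
          mul_nonneg hε (Nat.cast_nonneg ℓ)]

end Bounds
section Diff

variable (dims : ℕ → ℕ) (L W : ℕ) (R ε : ℝ)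
variable (A A' : ∀ ℓ : ℕ, Matrix (Fin (dims (ℓ + 1))) (Fin (dims ℓ)) ℝ)
variable (b b' : ∀ ℓ : ℕ, Fin (dims (ℓ + 1)) → ℝ)
variable (x : Fin (dims 0) → ℝ) (i' : Fin (dims 0))

lemma nnHidden_diff (hR : 1 ≤ R) (hW1 : 1 ≤ W) (hε : 0 ≤ ε)
    (hdims : ∀ ℓ ≤ L, dims ℓ ≤ W)
    (hA : ∀ ℓ < L, ∀ p r, |A ℓ p r| ≤ R)
    (hdA : ∀ ℓ < L, ∀ p r, |A ℓ p r - A' ℓ p r| ≤ ε)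
    (hdb : ∀ ℓ < L, ∀ p, |b ℓ p - b' ℓ p| ≤ ε)
    (hx : ∀ j, |x j| ≤ 1) :
    ∀ ℓ, ℓ ≤ L → ∀ q : Fin (dims ℓ),
      R * |nnHidden dims A b x ℓ q - nnHidden dims A' b' x ℓ q|
        ≤ 2 * (ℓ : ℝ) * ((W : ℝ) * R) ^ ℓ * ε := by
  intro ℓ
  induction ℓ with
  | zero =>
    intro _ q
    simp [nnHidden]
  | succ ℓ ih =>
    intro hℓ q
    have hℓ' : ℓ < L := Nat.lt_of_succ_le hℓ
    have hz := nnZ_diff_step dims L W R ε A A' b b' x hR hW1 hε hdims hA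
      hdA hdb hx ℓ hℓ' (ih (le_of_lt hℓ')) q
    have hR0 : (0 : ℝ) ≤ R := le_trans zero_le_one hR
    have ht : |nnHidden dims A b x (ℓ + 1) q - nnHidden dims A' b' x (ℓ + 1) q|
        ≤ |nnZ dims A b x ℓ q - nnZ dims A' b' x ℓ q| := by
      rw [nnHidden_succ, nnHidden_succ]
      exact tanh_lipschitz _ _
    calc R * |nnHidden dims A b x (ℓ + 1) q - nnHidden dims A' b' x (ℓ + 1) q|
        ≤ R * |nnZ dims A b x ℓ q - nnZ dims A' b' x ℓ q| :=
          mul_le_mul_of_nonneg_left ht hR0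
      _ ≤ (2 * (ℓ : ℝ) + 2) * ((W : ℝ) * R) ^ (ℓ + 1) * ε := hz
      _ = 2 * (((ℓ + 1 : ℕ)) : ℝ) * ((W : ℝ) * R) ^ (ℓ + 1) * ε := by push_cast; ring

lemma nnZ_diff (hR : 1 ≤ R) (hW1 : 1 ≤ W) (hε : 0 ≤ ε)
    (hdims : ∀ ℓ ≤ L, dims ℓ ≤ W)
    (hA : ∀ ℓ < L, ∀ p r, |A ℓ p r| ≤ R)
    (hdA : ∀ ℓ < L, ∀ p r, |A ℓ p r - A' ℓ p r| ≤ ε)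
    (hdb : ∀ ℓ < L, ∀ p, |b ℓ p - b' ℓ p| ≤ ε)
    (hx : ∀ j, |x j| ≤ 1) :
    ∀ ℓ, ℓ < L → ∀ p, R * |nnZ dims A b x ℓ p - nnZ dims A' b' x ℓ p|
      ≤ (2 * (ℓ : ℝ) + 2) * ((W : ℝ) * R) ^ (ℓ + 1) * ε := fun ℓ hℓ =>
  nnZ_diff_step dims L W R ε A A' b b' x hR hW1 hε hdims hA hdA hdb hx ℓ hℓ
    (nnHidden_diff dims L W R ε A A' b b' x hR hW1 hε hdims hA hdA hdb hx ℓ (le_of_lt hℓ))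

end Diff
section SDiff

variable (dims : ℕ → ℕ) (L W : ℕ) (R ε : ℝ)
variable (A A' : ∀ ℓ : ℕ, Matrix (Fin (dims (ℓ + 1))) (Fin (dims ℓ)) ℝ)
variable (b b' : ∀ ℓ : ℕ, Fin (dims (ℓ + 1)) → ℝ)
variable (x : Fin (dims 0) → ℝ) (i' : Fin (dims 0))

lemma nnS_diff (hR : 1 ≤ R) (hW1 : 1 ≤ W) (hε : 0 ≤ ε)
    (hdims : ∀ ℓ ≤ L, dims ℓ ≤ W)
    (hA : ∀ ℓ < L, ∀ p r, |A ℓ p r| ≤ R)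
    (hA2 : ∀ ℓ < L, ∀ p r, |A' ℓ p r| ≤ R)
    (hdA : ∀ ℓ < L, ∀ p r, |A ℓ p r - A' ℓ p r| ≤ ε)
    (hdb : ∀ ℓ < L, ∀ p, |b ℓ p - b' ℓ p| ≤ ε)
    (hx : ∀ j, |x j| ≤ 1) :
    ∀ ℓ, ℓ < L → ∀ p,
      |nnS dims A b x (Pi.single i' 1) ℓ p - nnS dims A' b' x (Pi.single i' 1) ℓ p|
        ≤ ((ℓ : ℝ) + 1) ^ 2 * ((W : ℝ) * R) ^ (2 * ℓ) * ε := by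
  have hR0 : (0 : ℝ) ≤ R := le_trans zero_le_one hR
  have hW0 : (1 : ℝ) ≤ (W : ℝ) := by exact_mod_cast hW1
  have hM1 : (1 : ℝ) ≤ (W : ℝ) * R := le_trans hR (le_mul_of_one_le_left hR0 hW0)
  have hM0 : (0 : ℝ) ≤ (W : ℝ) * R := le_trans zero_le_one hM1
  intro ℓ
  induction ℓ with
  | zero =>
    intro hℓ p
    have e1 : nnS dims A b x (Pi.single i' 1) 0 p = A 0 p i' := by
      simp [nnS, nnG, Pi.single_apply, mul_ite, Finset.sum_ite_eq']
    have e2 : nnS dims A' b' x (Pi.single i' 1) 0 p = A' 0 p i' := by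
      simp [nnS, nnG, Pi.single_apply, mul_ite, Finset.sum_ite_eq']
    rw [e1, e2]
    simpa using hdA 0 hℓ p i'
  | succ ℓ ih =>
    intro hℓ p
    have hℓ' : ℓ < L := Nat.lt_of_succ_lt hℓ
    set M : ℝ := (W : ℝ) * R with hMdef
    set K : ℝ := M ^ (ℓ + 1) with hK
    have hK1 : (1 : ℝ) ≤ K := one_le_pow₀ hM1
    have hSb' := nnS_bound dims L W R A' b' x i' hR hdims hA2 ℓ hℓ'
    have hSb := nnS_bound dims L W R A b x i' hR hdims hA ℓ hℓ'
    have hzd := nnZ_diff dims L W R ε A A' b b' x hR hW1 hε hdims hA hdA hdb hx ℓ hℓ'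
    have hB0 : (0 : ℝ) ≤ R ^ (ℓ + 1) * (W : ℝ) ^ ℓ := by positivity
    have hG' : ∀ j : Fin (dims (ℓ + 1)),
        |nnG dims A' b' x (Pi.single i' 1) (ℓ + 1) j| ≤ R ^ (ℓ + 1) * (W : ℝ) ^ ℓ := by
      intro j
      rw [nnG_succ, abs_mul]
      calc |1 - Real.tanh (nnZ dims A' b' x ℓ j) ^ 2|
            * |nnS dims A' b' x (Pi.single i' 1) ℓ j|
          ≤ 1 * (R ^ (ℓ + 1) * (W : ℝ) ^ ℓ) :=
            mul_le_mul (tanh_deriv_abs_le_one _) (hSb' j) (abs_nonneg _) zero_le_one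
        _ = R ^ (ℓ + 1) * (W : ℝ) ^ ℓ := one_mul _
    have hdG : ∀ j : Fin (dims (ℓ + 1)),
        R * |nnG dims A b x (Pi.single i' 1) (ℓ + 1) j
          - nnG dims A' b' x (Pi.single i' 1) (ℓ + 1) j|
        ≤ (2 * (ℓ : ℝ) + 2) * M ^ (ℓ + 1) * ε * (R ^ (ℓ + 1) * (W : ℝ) ^ ℓ)
          + R * (((ℓ : ℝ) + 1) ^ 2 * M ^ (2 * ℓ) * ε) := by
      intro j
      rw [nnG_succ, nnG_succ]
      have hsplit : (1 - Real.tanh (nnZ dims A b x ℓ j) ^ 2) * nnS dims A b x (Pi.single i' 1) ℓ j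
          - (1 - Real.tanh (nnZ dims A' b' x ℓ j) ^ 2) * nnS dims A' b' x (Pi.single i' 1) ℓ j
          = ((1 - Real.tanh (nnZ dims A b x ℓ j) ^ 2) - (1 - Real.tanh (nnZ dims A' b' x ℓ j) ^ 2))
              * nnS dims A b x (Pi.single i' 1) ℓ j
            + (1 - Real.tanh (nnZ dims A' b' x ℓ j) ^ 2)
              * (nnS dims A b x (Pi.single i' 1) ℓ j - nnS dims A' b' x (Pi.single i' 1) ℓ j) := by
        ring
      rw [hsplit]
      have habs : |((1 - Real.tanh (nnZ dims A b x ℓ j) ^ 2)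
            - (1 - Real.tanh (nnZ dims A' b' x ℓ j) ^ 2))
              * nnS dims A b x (Pi.single i' 1) ℓ j
            + (1 - Real.tanh (nnZ dims A' b' x ℓ j) ^ 2)
              * (nnS dims A b x (Pi.single i' 1) ℓ j - nnS dims A' b' x (Pi.single i' 1) ℓ j)|
          ≤ |nnZ dims A b x ℓ j - nnZ dims A' b' x ℓ j| * (R ^ (ℓ + 1) * (W : ℝ) ^ ℓ)
            + 1 * |nnS dims A b x (Pi.single i' 1) ℓ j
                - nnS dims A' b' x (Pi.single i' 1) ℓ j| := by
        refine le_trans (abs_add_le _ _) ?_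
        rw [abs_mul, abs_mul]
        exact add_le_add
          (mul_le_mul (tanh_deriv_lipschitz _ _) (hSb j) (abs_nonneg _) (abs_nonneg _))
          (mul_le_mul_of_nonneg_right (tanh_deriv_abs_le_one _) (abs_nonneg _))
      rw [mul_comm R _]
      calc |((1 - Real.tanh (nnZ dims A b x ℓ j) ^ 2)
            - (1 - Real.tanh (nnZ dims A' b' x ℓ j) ^ 2))
              * nnS dims A b x (Pi.single i' 1) ℓ j
            + (1 - Real.tanh (nnZ dims A' b' x ℓ j) ^ 2)
              * (nnS dims A b x (Pi.single i' 1) ℓ j - nnS dims A' b' x (Pi.single i' 1) ℓ j)| * R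
          ≤ (|nnZ dims A b x ℓ j - nnZ dims A' b' x ℓ j| * (R ^ (ℓ + 1) * (W : ℝ) ^ ℓ)
              + 1 * |nnS dims A b x (Pi.single i' 1) ℓ j
                  - nnS dims A' b' x (Pi.single i' 1) ℓ j|) * R :=
            mul_le_mul_of_nonneg_right habs hR0
        _ = (R * |nnZ dims A b x ℓ j - nnZ dims A' b' x ℓ j|) * (R ^ (ℓ + 1) * (W : ℝ) ^ ℓ)
              + R * |nnS dims A b x (Pi.single i' 1) ℓ j
                  - nnS dims A' b' x (Pi.single i' 1) ℓ j| := by ring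
        _ ≤ ((2 * (ℓ : ℝ) + 2) * M ^ (ℓ + 1) * ε) * (R ^ (ℓ + 1) * (W : ℝ) ^ ℓ)
              + R * (((ℓ : ℝ) + 1) ^ 2 * M ^ (2 * ℓ) * ε) :=
            add_le_add (mul_le_mul_of_nonneg_right (hzd j) hB0)
              (mul_le_mul_of_nonneg_left (ih hℓ' j) hR0)
        _ = (2 * (ℓ : ℝ) + 2) * M ^ (ℓ + 1) * ε * (R ^ (ℓ + 1) * (W : ℝ) ^ ℓ)
              + R * (((ℓ : ℝ) + 1) ^ 2 * M ^ (2 * ℓ) * ε) := by ring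
    set C : ℝ := ((2 * (ℓ : ℝ) + 2) * M ^ (ℓ + 1) * ε * (R ^ (ℓ + 1) * (W : ℝ) ^ ℓ)
        + R * (((ℓ : ℝ) + 1) ^ 2 * M ^ (2 * ℓ) * ε))
      + ε * (R ^ (ℓ + 1) * (W : ℝ) ^ ℓ) with hC
    have hterm : ∀ j : Fin (dims (ℓ + 1)),
        |A (ℓ + 1) p j * nnG dims A b x (Pi.single i' 1) (ℓ + 1) j
          - A' (ℓ + 1) p j * nnG dims A' b' x (Pi.single i' 1) (ℓ + 1) j| ≤ C := by
      intro j
      have hsp : A (ℓ + 1) p j * nnG dims A b x (Pi.single i' 1) (ℓ + 1) j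
          - A' (ℓ + 1) p j * nnG dims A' b' x (Pi.single i' 1) (ℓ + 1) j
          = A (ℓ + 1) p j * (nnG dims A b x (Pi.single i' 1) (ℓ + 1) j
              - nnG dims A' b' x (Pi.single i' 1) (ℓ + 1) j)
            + (A (ℓ + 1) p j - A' (ℓ + 1) p j) * nnG dims A' b' x (Pi.single i' 1) (ℓ + 1) j := by
        ring
      rw [hsp, hC]
      refine le_trans (abs_add_le _ _) (add_le_add ?_ ?_)
      · rw [abs_mul]
        calc |A (ℓ + 1) p j| * |nnG dims A b x (Pi.single i' 1) (ℓ + 1) j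
              - nnG dims A' b' x (Pi.single i' 1) (ℓ + 1) j|
            ≤ R * |nnG dims A b x (Pi.single i' 1) (ℓ + 1) j
              - nnG dims A' b' x (Pi.single i' 1) (ℓ + 1) j| :=
              mul_le_mul_of_nonneg_right (hA _ hℓ p j) (abs_nonneg _)
          _ ≤ _ := hdG j
      · rw [abs_mul]
        exact mul_le_mul (hdA _ hℓ p j) (hG' j) (abs_nonneg _) hε
    have hC0 : 0 ≤ C := by
      rw [hC]
      positivity
    have hsum : |nnS dims A b x (Pi.single i' 1) (ℓ + 1) p
        - nnS dims A' b' x (Pi.single i' 1) (ℓ + 1) p| ≤ (W : ℝ) * C := by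
      have hd : nnS dims A b x (Pi.single i' 1) (ℓ + 1) p
          - nnS dims A' b' x (Pi.single i' 1) (ℓ + 1) p
          = ∑ j, (A (ℓ + 1) p j * nnG dims A b x (Pi.single i' 1) (ℓ + 1) j
            - A' (ℓ + 1) p j * nnG dims A' b' x (Pi.single i' 1) (ℓ + 1) j) := by
        simp [nnS, Finset.sum_sub_distrib]
      rw [hd]
      refine le_trans (abs_sum_le_card_mul hterm) ?_
      apply mul_le_mul_of_nonneg_right _ hC0
      exact_mod_cast hdims (ℓ + 1) (le_of_lt hℓ)
    refine le_trans hsum ?_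
    have hid1 : (W : ℝ) * (R ^ (ℓ + 1) * (W : ℝ) ^ ℓ) = K := by
      rw [hK, hMdef, mul_pow]; ring
    have hMK : M ^ (2 * (ℓ + 1)) = K * K := by
      rw [hK, ← pow_add]; congr 1; ring
    have hle3 : M ^ (2 * ℓ + 1) ≤ K * K := by
      rw [hK, ← pow_add]
      exact pow_le_pow_right₀ hM1 (by omega)
    have hKK0 : (0 : ℝ) ≤ K * K := by positivity
    rw [hMK]
    have hC2 : (W : ℝ) * C
        ≤ (2 * (ℓ : ℝ) + 2) * (K * K) * ε + ((ℓ : ℝ) + 1) ^ 2 * (K * K) * ε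
          + 1 * (K * K) * ε := by
      have t1 : (W : ℝ) * ((2 * (ℓ : ℝ) + 2) * M ^ (ℓ + 1) * ε * (R ^ (ℓ + 1) * (W : ℝ) ^ ℓ))
          = (2 * (ℓ : ℝ) + 2) * (K * K) * ε := by
        rw [hK, hMdef, mul_pow]; ring
      have t2 : (W : ℝ) * (R * (((ℓ : ℝ) + 1) ^ 2 * M ^ (2 * ℓ) * ε))
          ≤ ((ℓ : ℝ) + 1) ^ 2 * (K * K) * ε := by
        have e : (W : ℝ) * (R * (((ℓ : ℝ) + 1) ^ 2 * M ^ (2 * ℓ) * ε))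
            = ((ℓ : ℝ) + 1) ^ 2 * M ^ (2 * ℓ + 1) * ε := by
          rw [pow_succ, hMdef]; ring
        rw [e]
        have h4 := mul_le_mul_of_nonneg_left hle3
          (by positivity : (0 : ℝ) ≤ ((ℓ : ℝ) + 1) ^ 2)
        exact mul_le_mul_of_nonneg_right h4 hε
      have t3 : (W : ℝ) * (ε * (R ^ (ℓ + 1) * (W : ℝ) ^ ℓ)) ≤ 1 * (K * K) * ε := by
        have e : (W : ℝ) * (ε * (R ^ (ℓ + 1) * (W : ℝ) ^ ℓ)) = K * ε := by
          rw [← hid1]; ring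
        rw [e, one_mul]
        have h5 : K ≤ K * K := le_mul_of_one_le_left (le_trans zero_le_one hK1) hK1
        exact mul_le_mul_of_nonneg_right h5 hε
      calc (W : ℝ) * C
          = (W : ℝ) * ((2 * (ℓ : ℝ) + 2) * M ^ (ℓ + 1) * ε * (R ^ (ℓ + 1) * (W : ℝ) ^ ℓ))
            + (W : ℝ) * (R * (((ℓ : ℝ) + 1) ^ 2 * M ^ (2 * ℓ) * ε))
            + (W : ℝ) * (ε * (R ^ (ℓ + 1) * (W : ℝ) ^ ℓ)) := by rw [hC]; ring
        _ ≤ (2 * (ℓ : ℝ) + 2) * (K * K) * ε + ((ℓ : ℝ) + 1) ^ 2 * (K * K) * ε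
            + 1 * (K * K) * ε := by
            rw [t1]
            exact add_le_add (add_le_add le_rfl t2) t3
    refine le_trans hC2 ?_
    have hc : ((ℓ + 1 : ℕ) : ℝ) + 1 = (ℓ : ℝ) + 2 := by push_cast; ring
    rw [hc]
    nlinarith [hKK0, hε, mul_nonneg hKK0 hε]

end SDiff
lemma fderiv_eq_nnS (D : ℕ → ℕ) (m : ℕ) (d : ℕ) (hD0 : D 0 = d)
    (A : ∀ ℓ : ℕ, Matrix (Fin (D (ℓ + 1))) (Fin (D ℓ)) ℝ)
    (b : ∀ ℓ : ℕ, Fin (D (ℓ + 1)) → ℝ)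
    (σ : (Fin d → ℝ) → ℝ) (out : Fin (D (m + 1)))
    (hσ : ∀ y : Fin d → ℝ, σ y = nnRealize D (m + 1) A b (fun j => y (Fin.cast hD0 j)) out)
    (x : Fin d → ℝ) (i : Fin d) :
    fderiv ℝ σ x (Pi.single i 1)
      = nnS D A b (fun j => x (Fin.cast hD0 j)) (Pi.single (Fin.cast hD0.symm i) 1) m out := by
  set xi : Fin (D 0) → ℝ := fun j => x (Fin.cast hD0 j) with hxi
  set w : Fin (D 0) → ℝ := Pi.single (Fin.cast hD0.symm i) 1 with hw
  have hσfun : σ = fun y => nnRealize D (m + 1) A b (fun j => y (Fin.cast hD0 j)) out :=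
    funext hσ
  have hinner : Differentiable ℝ (fun z : Fin (D 0) → ℝ =>
      (∑ j, A m out j * nnHidden D A b z m j) + b m out) :=
    (Differentiable.fun_sum fun j _ => (nnHidden_differentiable D A b m j).const_mul _).add_const _
  have hcast : Differentiable ℝ (fun y : Fin d → ℝ => fun j : Fin (D 0) => y (Fin.cast hD0 j)) :=
    differentiable_pi.mpr fun j => differentiable_pi.mp differentiable_id (Fin.cast hD0 j)
  have hdiff : DifferentiableAt ℝ σ x := by
    rw [hσfun]
    exact (hinner.comp hcast) x
  have hveq : ∀ j : Fin (D 0), (Pi.single i (1 : ℝ) : Fin d → ℝ) (Fin.cast hD0 j) = w j := by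
    intro j
    rw [hw]
    simp only [Pi.single_apply, Fin.ext_iff, Fin.coe_cast]
  have hpath : HasDerivAt (fun t : ℝ => x + t • (Pi.single i 1 : Fin d → ℝ))
      (Pi.single i 1 : Fin d → ℝ) 0 := by
    simpa using ((hasDerivAt_id (0 : ℝ)).smul_const (Pi.single i 1 : Fin d → ℝ)).const_add x
  have hx0 : x = x + (0 : ℝ) • (Pi.single i 1 : Fin d → ℝ) := by simp
  have h1 : HasDerivAt (fun t : ℝ => σ (x + t • (Pi.single i 1 : Fin d → ℝ)))
      (fderiv ℝ σ x (Pi.single i 1)) 0 := by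
    have hF : HasFDerivAt σ (fderiv ℝ σ x)
        ((fun t : ℝ => x + t • (Pi.single i 1 : Fin d → ℝ)) 0) := by
      rw [show (fun t : ℝ => x + t • (Pi.single i 1 : Fin d → ℝ)) 0 = x by simp]
      exact hdiff.hasFDerivAt
    have h1 := hF.comp_hasDerivAt 0 hpath
    simpa [Function.comp_def] using h1
  have h2 : HasDerivAt (fun t : ℝ => σ (x + t • (Pi.single i 1 : Fin d → ℝ))) (nnS D A b xi w m out) 0 := by
    have heqf : (fun t : ℝ => σ (x + t • (Pi.single i 1 : Fin d → ℝ)))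
        = fun t => (∑ j, A m out j * nnHidden D A b (fun j' => xi j' + t * w j') m j)
            + b m out := by
      funext t
      rw [hσ]
      have harg : (fun j => (x + t • (Pi.single i 1 : Fin d → ℝ)) (Fin.cast hD0 j))
          = fun j => xi j + t * w j := by
        funext j
        simp only [Pi.add_apply, Pi.smul_apply, smul_eq_mul]
        rw [hveq j, hxi]
      rw [harg]
      rfl
    rw [heqf]
    exact (HasDerivAt.fun_sum fun j _ =>
      (nnHidden_path_hasDerivAt D A b xi w m j).const_mul (A m out j)).add_const _
  exact h1.unique h2
/-- Lipschitz continuity, with respect to the neural network parameters, of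
the PDE-residual integrand `|∇·σ_κ(x) + f(x)|²`, with Lipschitz constant
`Λ_σ = 2 (d R_σ^{L_σ} W_σ^{L_σ-1} + c_f) · d L_σ² R_σ^{2L_σ-2} W_σ^{2L_σ-2}`. -/
theorem divergence_residual_lipschitz (d Lσ Wσ : ℕ) (hL : 1 ≤ Lσ) (Rσ : ℝ) (hR : 1 ≤ Rσ)
    (dims : Fin d → ℕ → ℕ)
    (h0 : ∀ i, dims i 0 = d) (hout : ∀ i, dims i Lσ = 1)
    (hW : ∀ i, ∀ ℓ ≤ Lσ, dims i ℓ ≤ Wσ)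
    (A A' : ∀ i : Fin d, ∀ ℓ : ℕ, Matrix (Fin (dims i (ℓ + 1))) (Fin (dims i ℓ)) ℝ)
    (b b' : ∀ i : Fin d, ∀ ℓ : ℕ, Fin (dims i (ℓ + 1)) → ℝ)
    (hA : ∀ i, ∀ ℓ < Lσ, ∀ p r, |A i ℓ p r| ≤ Rσ)
    (hb : ∀ i, ∀ ℓ < Lσ, ∀ p, |b i ℓ p| ≤ Rσ)
    (hA' : ∀ i, ∀ ℓ < Lσ, ∀ p r, |A' i ℓ p r| ≤ Rσ)
    (hb' : ∀ i, ∀ ℓ < Lσ, ∀ p, |b' i ℓ p| ≤ Rσ)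
    (σf σf' : Fin d → (Fin d → ℝ) → ℝ)
    (hσ : ∀ i x, σf i x =
      nnRealize (dims i) Lσ (A i) (b i) (fun j => x (Fin.cast (h0 i) j))
        ⟨0, lt_of_lt_of_eq Nat.one_pos (hout i).symm⟩)
    (hσ' : ∀ i x, σf' i x =
      nnRealize (dims i) Lσ (A' i) (b' i) (fun j => x (Fin.cast (h0 i) j))
        ⟨0, lt_of_lt_of_eq Nat.one_pos (hout i).symm⟩)
    (εκ : ℝ) (hεκ : 0 ≤ εκ)
    (hdA : ∀ i, ∀ ℓ < Lσ, ∀ p r, |A i ℓ p r - A' i ℓ p r| ≤ εκ)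
    (hdb : ∀ i, ∀ ℓ < Lσ, ∀ p, |b i ℓ p - b' i ℓ p| ≤ εκ)
    (Ω : Set (Fin d → ℝ)) (hΩ : ∀ x ∈ Ω, ∀ j, |x j| ≤ 1)
    (f : (Fin d → ℝ) → ℝ) (cf : ℝ) (hf : ∀ x ∈ Ω, |f x| ≤ cf)
    (x : Fin d → ℝ) (hx : x ∈ Ω) :
    |((∑ i, fderiv ℝ (σf i) x (Pi.single i 1)) + f x) ^ 2 -
        ((∑ i, fderiv ℝ (σf' i) x (Pi.single i 1)) + f x) ^ 2| ≤
      (2 * ((d : ℝ) * Rσ ^ Lσ * (Wσ : ℝ) ^ (Lσ - 1) + cf) *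
          ((d : ℝ) * (Lσ : ℝ) ^ 2 * Rσ ^ (2 * Lσ - 2) * (Wσ : ℝ) ^ (2 * Lσ - 2))) * εκ := by
  obtain ⟨m, rfl⟩ : ∃ m, Lσ = m + 1 := ⟨Lσ - 1, by omega⟩
  have hxb : ∀ j, |x j| ≤ 1 := hΩ x hx
  have hcf : 0 ≤ cf := le_trans (abs_nonneg _) (hf x hx)
  have hR0 : (0 : ℝ) ≤ Rσ := le_trans zero_le_one hR
  -- directional derivative values
  set G : Fin d → ℝ := fun i =>
    nnS (dims i) (A i) (b i) (fun j => x (Fin.cast (h0 i) j))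
      (Pi.single (Fin.cast (h0 i).symm i) 1) m
      ⟨0, lt_of_lt_of_eq Nat.one_pos (hout i).symm⟩ with hG
  set G' : Fin d → ℝ := fun i =>
    nnS (dims i) (A' i) (b' i) (fun j => x (Fin.cast (h0 i) j))
      (Pi.single (Fin.cast (h0 i).symm i) 1) m
      ⟨0, lt_of_lt_of_eq Nat.one_pos (hout i).symm⟩ with hG'
  have hfd : ∀ i, fderiv ℝ (σf i) x (Pi.single i 1) = G i := fun i =>
    fderiv_eq_nnS (dims i) m d (h0 i) (A i) (b i) (σf i) _ (hσ i) x i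
  have hfd' : ∀ i, fderiv ℝ (σf' i) x (Pi.single i 1) = G' i := fun i =>
    fderiv_eq_nnS (dims i) m d (h0 i) (A' i) (b' i) (σf' i) _ (hσ' i) x i
  have hxib : ∀ i : Fin d, ∀ j, |x (Fin.cast (h0 i) j)| ≤ 1 := fun i j => hxb _
  have hW1 : ∀ i : Fin d, 1 ≤ Wσ := by
    intro i
    have h1 := hW i (m + 1) le_rfl
    have h2 := hout i
    omega
  have hGb : ∀ i, |G i| ≤ Rσ ^ (m + 1) * (Wσ : ℝ) ^ m := fun i =>
    nnS_bound (dims i) (m + 1) Wσ Rσ (A i) (b i) _ _ hR (hW i) (hA i) m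
      (Nat.lt_succ_self m) _
  have hGb' : ∀ i, |G' i| ≤ Rσ ^ (m + 1) * (Wσ : ℝ) ^ m := fun i =>
    nnS_bound (dims i) (m + 1) Wσ Rσ (A' i) (b' i) _ _ hR (hW i) (hA' i) m
      (Nat.lt_succ_self m) _
  have hGd : ∀ i, |G i - G' i|
      ≤ ((m : ℝ) + 1) ^ 2 * ((Wσ : ℝ) * Rσ) ^ (2 * m) * εκ := fun i =>
    nnS_diff (dims i) (m + 1) Wσ Rσ εκ (A i) (A' i) (b i) (b' i) _ _ hR (hW1 i) hεκ
      (hW i) (hA i) (hA' i) (hdA i) (hdb i) (hxib i) m (Nat.lt_succ_self m) _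
  have hs1 : (∑ i, fderiv ℝ (σf i) x (Pi.single i 1)) = ∑ i, G i :=
    Finset.sum_congr rfl fun i _ => hfd i
  have hs2 : (∑ i, fderiv ℝ (σf' i) x (Pi.single i 1)) = ∑ i, G' i :=
    Finset.sum_congr rfl fun i _ => hfd' i
  rw [hs1, hs2]
  have habs1 : |∑ i, G i| ≤ (d : ℝ) * (Rσ ^ (m + 1) * (Wσ : ℝ) ^ m) :=
    abs_sum_le_card_mul hGb
  have habs1' : |∑ i, G' i| ≤ (d : ℝ) * (Rσ ^ (m + 1) * (Wσ : ℝ) ^ m) :=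
    abs_sum_le_card_mul hGb'
  have habs2 : |(∑ i, G i) - ∑ i, G' i|
      ≤ (d : ℝ) * (((m : ℝ) + 1) ^ 2 * ((Wσ : ℝ) * Rσ) ^ (2 * m) * εκ) := by
    rw [← Finset.sum_sub_distrib]
    exact abs_sum_le_card_mul hGd
  set a : ℝ := (∑ i, G i) + f x with ha
  set a' : ℝ := (∑ i, G' i) + f x with ha'
  have hM : |a| ≤ (d : ℝ) * (Rσ ^ (m + 1) * (Wσ : ℝ) ^ m) + cf :=
    le_trans (abs_add_le _ _) (add_le_add habs1 (hf x hx))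
  have hM' : |a'| ≤ (d : ℝ) * (Rσ ^ (m + 1) * (Wσ : ℝ) ^ m) + cf :=
    le_trans (abs_add_le _ _) (add_le_add habs1' (hf x hx))
  have hsub : a - a' = (∑ i, G i) - ∑ i, G' i := by rw [ha, ha']; ring
  have hfact : a ^ 2 - a' ^ 2 = (a + a') * (a - a') := by ring
  have hMnn : (0 : ℝ) ≤ (d : ℝ) * (Rσ ^ (m + 1) * (Wσ : ℝ) ^ m) + cf := by positivity
  have hfin : |a ^ 2 - a' ^ 2|
      ≤ (2 * ((d : ℝ) * (Rσ ^ (m + 1) * (Wσ : ℝ) ^ m) + cf))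
        * ((d : ℝ) * (((m : ℝ) + 1) ^ 2 * ((Wσ : ℝ) * Rσ) ^ (2 * m) * εκ)) := by
    rw [hfact, abs_mul]
    refine mul_le_mul ?_ (by rw [hsub]; exact habs2) (abs_nonneg _) (by linarith)
    calc |a + a'| ≤ |a| + |a'| := abs_add_le _ _
      _ ≤ 2 * ((d : ℝ) * (Rσ ^ (m + 1) * (Wσ : ℝ) ^ m) + cf) := by linarith
  refine le_trans hfin (le_of_eq ?_)
  rw [show m + 1 - 1 = m from rfl, show 2 * (m + 1) - 2 = 2 * m from by omega, mul_pow]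
  push_cast
  ring
end

section
/- Let d, L_σ, W_σ ∈ ℕ with L_σ ≥ 1 and let R_σ ≥ 1. Let σ_κ, σ_{κ̃} : ℝ^d → ℝ^d be two vector fields whose d components are realizations of tanh neural networks with a common architecture of depth L_σ and width at most W_σ, with parameter vectors κ, κ̃ each bounded by R_σ in the ℓ∞ norm. Let Γ ⊆ { x ∈ ℝ^d : ‖x‖_{ℓ∞} ≤ 1 }, let n : Γ → ℝ^d satisfy ‖n(x)‖_{ℓ2} ≤ 1 for all x ∈ Γ, and let g : Γ → ℝ satisfy |g(x)| ≤ c_g for all x ∈ Γ. Then for every x ∈ Γ, | (n(x) · σ_κ(x) − g(x))² − (n(x) · σ_{κ̃}(x) − g(x))² | ≤ Λ_b ‖κ − κ̃‖_{ℓ∞}, where Λ_b = 4 ( √d R_σ (W_σ + 1) + c_g ) · √d L_σ R_σ^{L_σ − 1} W_σ^{L_σ}. -/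
lemma my_tanh_abs_le_one (t : ℝ) : |Real.tanh t| ≤ 1 := by
  rw [Real.tanh_eq_sinh_div_cosh, abs_div, abs_of_pos (Real.cosh_pos t),
    div_le_one (Real.cosh_pos t), ← Real.cosh_abs t, Real.abs_sinh]
  exact (Real.sinh_lt_cosh _).le

lemma my_tanh_hasDerivAt (t : ℝ) :
    HasDerivAt Real.tanh (1 / Real.cosh t ^ 2) t := by
  have h := (Real.hasDerivAt_sinh t).div (Real.hasDerivAt_cosh t) (Real.cosh_pos t).ne'
  have e : (Real.cosh t * Real.cosh t - Real.sinh t * Real.sinh t) / Real.cosh t ^ 2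
      = 1 / Real.cosh t ^ 2 := by
    have := Real.cosh_sq_sub_sinh_sq t
    field_simp
    nlinarith [this]
  rw [e] at h
  have : Real.tanh = fun y => Real.sinh y / Real.cosh y := funext fun y => Real.tanh_eq_sinh_div_cosh y
  rw [this]
  exact h

lemma my_tanh_lip (a b : ℝ) : |Real.tanh a - Real.tanh b| ≤ |a - b| := by
  have hlip : LipschitzWith 1 Real.tanh := by
    apply lipschitzWith_of_nnnorm_deriv_le
      (fun x => (my_tanh_hasDerivAt x).differentiableAt)
    intro x
    rw [(my_tanh_hasDerivAt x).deriv, ← NNReal.coe_le_coe, coe_nnnorm,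
      Real.norm_eq_abs, NNReal.coe_one]
    have h1 : (1:ℝ) ≤ Real.cosh x ^ 2 := by
      nlinarith [Real.one_le_cosh x]
    rw [abs_of_pos (by positivity)]
    rw [div_le_one (by positivity)]
    exact h1
  have := hlip.dist_le_mul a b
  simpa [Real.dist_eq] using this
lemma my_hidden_le (dims : ℕ → ℕ)
    (A : ∀ ℓ : ℕ, Matrix (Fin (dims (ℓ + 1))) (Fin (dims ℓ)) ℝ)
    (b : ∀ ℓ : ℕ, Fin (dims (ℓ + 1)) → ℝ)
    (x : Fin (dims 0) → ℝ) (hx : ∀ j, |x j| ≤ 1) :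
    ∀ ℓ, ∀ j, |nnHidden dims A b x ℓ j| ≤ 1 := by
  intro ℓ
  cases ℓ with
  | zero => exact hx
  | succ m => intro j; simp only [nnHidden]; exact my_tanh_abs_le_one _

lemma my_row_diff {k : ℕ} (a a' v v' : Fin k → ℝ) (β β' Rσ εκ δ : ℝ)
    (hε : 0 ≤ εκ) (hδ : 0 ≤ δ) (hR : 0 ≤ Rσ)
    (ha' : ∀ j, |a' j| ≤ Rσ) (hda : ∀ j, |a j - a' j| ≤ εκ)
    (hv : ∀ j, |v j| ≤ 1) (hdv : ∀ j, |v j - v' j| ≤ δ)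
    (hdβ : |β - β'| ≤ εκ) :
    |((∑ j, a j * v j) + β) - ((∑ j, a' j * v' j) + β')|
      ≤ (k : ℝ) * (εκ + Rσ * δ) + εκ := by
  have key : ∀ j, |a j * v j - a' j * v' j| ≤ εκ + Rσ * δ := by
    intro j
    have e : a j * v j - a' j * v' j
        = (a j - a' j) * v j + a' j * (v j - v' j) := by ring
    rw [e]
    refine (abs_add_le _ _).trans ?_
    rw [abs_mul, abs_mul]
    calc |a j - a' j| * |v j| + |a' j| * |v j - v' j|
        ≤ εκ * 1 + Rσ * δ :=
          add_le_add (mul_le_mul (hda j) (hv j) (abs_nonneg _) hε)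
            (mul_le_mul (ha' j) (hdv j) (abs_nonneg _) hR)
      _ = εκ + Rσ * δ := by ring
  calc |((∑ j, a j * v j) + β) - ((∑ j, a' j * v' j) + β')|
      = |(∑ j, (a j * v j - a' j * v' j)) + (β - β')| := by
        rw [Finset.sum_sub_distrib]; ring_nf
    _ ≤ |∑ j, (a j * v j - a' j * v' j)| + |β - β'| := abs_add_le _ _
    _ ≤ (∑ j, |a j * v j - a' j * v' j|) + εκ := by
        gcongr
        exact Finset.abs_sum_le_sum_abs _ _
    _ ≤ (∑ _j : Fin k, (εκ + Rσ * δ)) + εκ := by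
        gcongr with j
        exact key j
    _ = (k : ℝ) * (εκ + Rσ * δ) + εκ := by
        simp [Finset.sum_const, Finset.card_univ, nsmul_eq_mul]
        ring

lemma my_preact_diff (dims : ℕ → ℕ) (L W : ℕ) (Rσ εκ : ℝ)
    (hR : 1 ≤ Rσ) (hε : 0 ≤ εκ) (hW1 : 1 ≤ W)
    (A A' : ∀ ℓ : ℕ, Matrix (Fin (dims (ℓ + 1))) (Fin (dims ℓ)) ℝ)
    (b b' : ∀ ℓ : ℕ, Fin (dims (ℓ + 1)) → ℝ)
    (x : Fin (dims 0) → ℝ) (hx : ∀ j, |x j| ≤ 1)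
    (hdims : ∀ ℓ ≤ L, dims ℓ ≤ W)
    (hA' : ∀ ℓ < L, ∀ p r, |A' ℓ p r| ≤ Rσ)
    (hdA : ∀ ℓ < L, ∀ p r, |A ℓ p r - A' ℓ p r| ≤ εκ)
    (hdb : ∀ ℓ < L, ∀ p, |b ℓ p - b' ℓ p| ≤ εκ) :
    ∀ ℓ, ℓ < L → ∀ p : Fin (dims (ℓ + 1)),
      |((∑ j, A ℓ p j * nnHidden dims A b x ℓ j) + b ℓ p)
        - ((∑ j, A' ℓ p j * nnHidden dims A' b' x ℓ j) + b' ℓ p)|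
      ≤ 2 * ((ℓ : ℝ) + 1) * Rσ ^ ℓ * (W : ℝ) ^ (ℓ + 1) * εκ := by
  have hWR : (1 : ℝ) ≤ (W : ℝ) := by exact_mod_cast hW1
  intro ℓ
  induction ℓ with
  | zero =>
    intro hℓ p
    have h := my_row_diff (fun j => A 0 p j) (fun j => A' 0 p j)
      (nnHidden dims A b x 0) (nnHidden dims A' b' x 0) (b 0 p) (b' 0 p) Rσ εκ 0
      hε le_rfl (le_trans zero_le_one hR)
      (fun j => hA' 0 hℓ p j) (fun j => hdA 0 hℓ p j)
      (fun j => hx j) (fun j => by simp [nnHidden]) (hdb 0 hℓ p)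
    refine h.trans ?_
    have hd : (dims 0 : ℝ) ≤ (W : ℝ) := by exact_mod_cast hdims 0 (Nat.zero_le _)
    have key : (dims 0 : ℝ) * (εκ + Rσ * 0) + εκ ≤ 2 * ((0:ℝ) + 1) * Rσ ^ 0 * (W : ℝ) ^ (0 + 1) * εκ := by
      norm_num
      nlinarith [mul_le_mul_of_nonneg_right hd hε, mul_le_mul_of_nonneg_right (sub_nonneg.2 hWR) hε]
    simpa using key
  | succ m ih =>
    intro hℓ p
    have hm : m < L := Nat.lt_of_succ_lt hℓ
    set δ : ℝ := 2 * ((m : ℝ) + 1) * Rσ ^ m * (W : ℝ) ^ (m + 1) * εκ with hδdef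
    have hδ0 : 0 ≤ δ := by positivity
    have hdv : ∀ j, |nnHidden dims A b x (m + 1) j - nnHidden dims A' b' x (m + 1) j| ≤ δ := by
      intro j
      simp only [nnHidden]
      exact (my_tanh_lip _ _).trans (ih hm j)
    have h := my_row_diff (fun j => A (m+1) p j) (fun j => A' (m+1) p j)
      (nnHidden dims A b x (m+1)) (nnHidden dims A' b' x (m+1)) (b (m+1) p) (b' (m+1) p)
      Rσ εκ δ hε hδ0 (le_trans zero_le_one hR)
      (fun j => hA' (m+1) hℓ p j) (fun j => hdA (m+1) hℓ p j)
      (fun j => my_hidden_le dims A b x hx (m+1) j) hdv (hdb (m+1) hℓ p)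
    refine h.trans ?_
    have hd : (dims (m+1) : ℝ) ≤ (W : ℝ) := by
      exact_mod_cast hdims (m+1) (le_of_lt hℓ)
    have h2 : (dims (m+1) : ℝ) * (εκ + Rσ * δ) + εκ ≤ (W : ℝ) * (εκ + Rσ * δ) + εκ := by
      have : 0 ≤ εκ + Rσ * δ := by positivity
      nlinarith
    refine h2.trans ?_
    have hRm : (1:ℝ) ≤ Rσ ^ (m+1) := one_le_pow₀ hR
    have hWm : (W:ℝ) ≤ (W:ℝ) ^ (m + 2) := le_self_pow₀ hWR (Nat.succ_ne_zero _)
    have key : (W:ℝ) * εκ + εκ ≤ 2 * Rσ ^ (m+1) * (W:ℝ) ^ (m+2) * εκ := by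
      nlinarith [mul_le_mul_of_nonneg_right hWm hε, mul_le_mul_of_nonneg_right
        (mul_le_mul hRm hWm (le_trans zero_le_one hWR) (le_trans zero_le_one hRm)) hε]
    have expand : (W:ℝ) * (εκ + Rσ * δ) + εκ
        = (W:ℝ)*εκ + εκ + 2 * ((m:ℝ)+1) * Rσ^(m+1) * (W:ℝ)^(m+2) * εκ := by
      rw [hδdef]; ring
    rw [expand]
    have goal_eq : 2 * (((m+1 : ℕ) : ℝ) + 1) * Rσ ^ (m+1) * (W : ℝ) ^ (m+1+1) * εκ
        = 2 * Rσ^(m+1) * (W:ℝ)^(m+2) * εκ + 2 * ((m:ℝ)+1) * Rσ^(m+1) * (W:ℝ)^(m+2) * εκ := by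
      push_cast; ring
    rw [goal_eq]
    linarith [key]

lemma my_out_abs (dims : ℕ → ℕ) (m W : ℕ) (Rσ : ℝ) (hR : 1 ≤ Rσ)
    (A : ∀ ℓ : ℕ, Matrix (Fin (dims (ℓ + 1))) (Fin (dims ℓ)) ℝ)
    (b : ∀ ℓ : ℕ, Fin (dims (ℓ + 1)) → ℝ)
    (x : Fin (dims 0) → ℝ) (hx : ∀ j, |x j| ≤ 1)
    (hd : dims m ≤ W)
    (hA : ∀ p r, |A m p r| ≤ Rσ) (hb : ∀ p, |b m p| ≤ Rσ)
    (p : Fin (dims (m + 1))) :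
    |(∑ j, A m p j * nnHidden dims A b x m j) + b m p| ≤ Rσ * ((W : ℝ) + 1) := by
  have hR0 : (0:ℝ) ≤ Rσ := le_trans zero_le_one hR
  calc |(∑ j, A m p j * nnHidden dims A b x m j) + b m p|
      ≤ |∑ j, A m p j * nnHidden dims A b x m j| + |b m p| := abs_add_le _ _
    _ ≤ (∑ j, |A m p j * nnHidden dims A b x m j|) + Rσ := by
        gcongr
        · exact Finset.abs_sum_le_sum_abs _ _
        · exact hb p
    _ ≤ (∑ _j : Fin (dims m), Rσ) + Rσ := by
        gcongr with j
        rw [abs_mul]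
        calc |A m p j| * |nnHidden dims A b x m j| ≤ Rσ * 1 :=
          mul_le_mul (hA p j) (my_hidden_le dims A b x hx m j) (abs_nonneg _) hR0
        _ = Rσ := mul_one _
    _ = (dims m : ℝ) * Rσ + Rσ := by simp [Finset.sum_const, Finset.card_univ, nsmul_eq_mul]
    _ ≤ (W : ℝ) * Rσ + Rσ := by
        have : (dims m : ℝ) ≤ (W : ℝ) := by exact_mod_cast hd
        nlinarith
    _ = Rσ * ((W : ℝ) + 1) := by ring

lemma my_cs {d : ℕ} (n u : Fin d → ℝ) (M : ℝ) (hM : 0 ≤ M)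
    (hn : Real.sqrt (∑ i, (n i) ^ 2) ≤ 1) (hu : ∀ i, |u i| ≤ M) :
    |∑ i, n i * u i| ≤ Real.sqrt d * M := by
  have h1 := Real.sum_mul_le_sqrt_mul_sqrt Finset.univ n u
  have h2 := Real.sum_mul_le_sqrt_mul_sqrt Finset.univ n (fun i => -(u i))
  have hsq : Real.sqrt (∑ i, (u i) ^ 2) ≤ Real.sqrt d * M := by
    have hsum : (∑ i, (u i) ^ 2) ≤ (d : ℝ) * M ^ 2 := by
      calc (∑ i, (u i) ^ 2) ≤ ∑ _i : Fin d, M ^ 2 := by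
            apply Finset.sum_le_sum
            intro i _
            rw [← sq_abs]
            exact pow_le_pow_left₀ (abs_nonneg _) (hu i) 2
        _ = (d : ℝ) * M ^ 2 := by simp [Finset.sum_const, Finset.card_univ, nsmul_eq_mul]
    calc Real.sqrt (∑ i, (u i) ^ 2) ≤ Real.sqrt ((d : ℝ) * M ^ 2) := Real.sqrt_le_sqrt hsum
      _ = Real.sqrt d * M := by
          rw [Real.sqrt_mul (Nat.cast_nonneg d), Real.sqrt_sq hM]
  have key : ∀ (w : Fin d → ℝ), (∀ i, (w i)^2 = (u i)^2) → (∑ i, n i * w i) ≤ Real.sqrt d * M := by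
    intro w hw
    have := Real.sum_mul_le_sqrt_mul_sqrt Finset.univ n w
    have heq : Real.sqrt (∑ i, (w i)^2) = Real.sqrt (∑ i, (u i)^2) := by
      congr 1; exact Finset.sum_congr rfl fun i _ => hw i
    rw [heq] at this
    calc (∑ i, n i * w i) ≤ Real.sqrt (∑ i, (n i)^2) * Real.sqrt (∑ i, (u i)^2) := this
      _ ≤ 1 * (Real.sqrt d * M) :=
          mul_le_mul hn hsq (Real.sqrt_nonneg _) zero_le_one
      _ = Real.sqrt d * M := one_mul _
  rw [abs_le]
  constructor
  · have := key (fun i => -(u i)) (fun i => by ring)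
    simp only [mul_neg, Finset.sum_neg_distrib] at this
    linarith
  · exact key u (fun i => rfl)

/-- Lipschitz continuity, with respect to the neural network parameters, of
the Neumann boundary integrand `|n(x)·σ_κ(x) − g(x)|²`, with Lipschitz constant
`Λ_b = 4 (√d R_σ (W_σ+1) + c_g) · √d L_σ R_σ^{L_σ-1} W_σ^{L_σ}`. -/

theorem boundary_residual_lipschitz (d Lσ Wσ : ℕ) (hL : 1 ≤ Lσ) (Rσ : ℝ) (hR : 1 ≤ Rσ)
    (dims : Fin d → ℕ → ℕ)
    (h0 : ∀ i, dims i 0 = d) (hout : ∀ i, dims i Lσ = 1)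
    (hW : ∀ i, ∀ ℓ ≤ Lσ, dims i ℓ ≤ Wσ)
    (A A' : ∀ i : Fin d, ∀ ℓ : ℕ, Matrix (Fin (dims i (ℓ + 1))) (Fin (dims i ℓ)) ℝ)
    (b b' : ∀ i : Fin d, ∀ ℓ : ℕ, Fin (dims i (ℓ + 1)) → ℝ)
    (hA : ∀ i, ∀ ℓ < Lσ, ∀ p r, |A i ℓ p r| ≤ Rσ)
    (hb : ∀ i, ∀ ℓ < Lσ, ∀ p, |b i ℓ p| ≤ Rσ)
    (hA' : ∀ i, ∀ ℓ < Lσ, ∀ p r, |A' i ℓ p r| ≤ Rσ)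
    (hb' : ∀ i, ∀ ℓ < Lσ, ∀ p, |b' i ℓ p| ≤ Rσ)
    (σf σf' : Fin d → (Fin d → ℝ) → ℝ)
    (hσ : ∀ i x, σf i x =
      nnRealize (dims i) Lσ (A i) (b i) (fun j => x (Fin.cast (h0 i) j))
        ⟨0, lt_of_lt_of_eq Nat.one_pos (hout i).symm⟩)
    (hσ' : ∀ i x, σf' i x =
      nnRealize (dims i) Lσ (A' i) (b' i) (fun j => x (Fin.cast (h0 i) j))
        ⟨0, lt_of_lt_of_eq Nat.one_pos (hout i).symm⟩)
    (εκ : ℝ) (hεκ : 0 ≤ εκ)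
    (hdA : ∀ i, ∀ ℓ < Lσ, ∀ p r, |A i ℓ p r - A' i ℓ p r| ≤ εκ)
    (hdb : ∀ i, ∀ ℓ < Lσ, ∀ p, |b i ℓ p - b' i ℓ p| ≤ εκ)
    (Γ : Set (Fin d → ℝ)) (hΓ : ∀ x ∈ Γ, ∀ j, |x j| ≤ 1)
    (nv : (Fin d → ℝ) → Fin d → ℝ)
    (hnv : ∀ x ∈ Γ, Real.sqrt (∑ i, (nv x i) ^ 2) ≤ 1)
    (g : (Fin d → ℝ) → ℝ) (cg : ℝ) (hg : ∀ x ∈ Γ, |g x| ≤ cg)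
    (x : Fin d → ℝ) (hx : x ∈ Γ) :
    |((∑ i, nv x i * σf i x) - g x) ^ 2 - ((∑ i, nv x i * σf' i x) - g x) ^ 2| ≤
      (4 * (Real.sqrt d * Rσ * ((Wσ : ℝ) + 1) + cg) *
          (Real.sqrt d * (Lσ : ℝ) * Rσ ^ (Lσ - 1) * (Wσ : ℝ) ^ Lσ)) * εκ := by
  have hcg : 0 ≤ cg := (abs_nonneg _).trans (hg x hx)
  rcases Nat.eq_zero_or_pos d with hd0 | hd
  · subst hd0
    simp
  · obtain ⟨m, rfl⟩ : ∃ m, Lσ = m + 1 := ⟨Lσ - 1, (Nat.succ_pred_eq_of_pos hL).symm⟩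
    have i0 : Fin d := ⟨0, hd⟩
    have hW1 : 1 ≤ Wσ := by
      calc 1 = dims i0 (m + 1) := (hout i0).symm
        _ ≤ Wσ := hW i0 (m + 1) le_rfl
    have hR0 : (0:ℝ) < Rσ := lt_of_lt_of_le one_pos hR
    have hWR : (1:ℝ) ≤ (Wσ:ℝ) := by exact_mod_cast hW1
    set S : ℝ := Rσ * ((Wσ : ℝ) + 1) with hSdef
    set D : ℝ := 2 * ((m : ℝ) + 1) * Rσ ^ m * (Wσ : ℝ) ^ (m + 1) * εκ with hDdef
    have hS0 : 0 ≤ S := by rw [hSdef]; positivity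
    have hD0 : 0 ≤ D := by
      rw [hDdef]
      have := hR0.le
      positivity
    have hxi : ∀ i : Fin d, ∀ j, |x (Fin.cast (h0 i) j)| ≤ 1 := fun i j => hΓ x hx _
    have hσb : ∀ i, |σf i x| ≤ S := by
      intro i
      rw [hσ i x]
      exact my_out_abs (dims i) m Wσ Rσ hR (A i) (b i) _ (hxi i)
        (hW i m (by omega)) (hA i m (by omega) ) (hb i m (by omega)) _
    have hσb' : ∀ i, |σf' i x| ≤ S := by
      intro i
      rw [hσ' i x]
      exact my_out_abs (dims i) m Wσ Rσ hR (A' i) (b' i) _ (hxi i)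
        (hW i m (by omega)) (hA' i m (by omega)) (hb' i m (by omega)) _
    have hdiffb : ∀ i, |σf i x - σf' i x| ≤ D := by
      intro i
      rw [hσ i x, hσ' i x]
      exact my_preact_diff (dims i) (m+1) Wσ Rσ εκ hR hεκ hW1 (A i) (A' i) (b i) (b' i)
        _ (hxi i) (hW i) (hA' i) (hdA i) (hdb i) m (Nat.lt_succ_self m) _
    have h1 : |∑ i, nv x i * σf i x| ≤ Real.sqrt d * S :=
      my_cs _ _ S hS0 (hnv x hx) hσb
    have h2 : |∑ i, nv x i * σf' i x| ≤ Real.sqrt d * S :=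
      my_cs _ _ S hS0 (hnv x hx) hσb'
    have h3 : |(∑ i, nv x i * σf i x) - (∑ i, nv x i * σf' i x)| ≤ Real.sqrt d * D := by
      have e : (∑ i, nv x i * σf i x) - (∑ i, nv x i * σf' i x)
          = ∑ i, nv x i * (σf i x - σf' i x) := by
        rw [← Finset.sum_sub_distrib]
        exact Finset.sum_congr rfl fun i _ => by ring
      rw [e]
      exact my_cs _ _ D hD0 (hnv x hx) (fun i => hdiffb i)
    have hgx := abs_le.1 (hg x hx)
    have h1' := abs_le.1 h1
    have h2' := abs_le.1 h2
    have hsum : |(((∑ i, nv x i * σf i x) - g x) + ((∑ i, nv x i * σf' i x) - g x))|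
        ≤ 2 * (Real.sqrt d * S + cg) :=
      abs_le.2 ⟨by linarith [h1'.1, h2'.1, hgx.2], by linarith [h1'.2, h2'.2, hgx.1]⟩
    have hdiff : |(((∑ i, nv x i * σf i x) - g x) - ((∑ i, nv x i * σf' i x) - g x))|
        ≤ Real.sqrt d * D := by
      have e : (((∑ i, nv x i * σf i x) - g x) - ((∑ i, nv x i * σf' i x) - g x))
          = (∑ i, nv x i * σf i x) - (∑ i, nv x i * σf' i x) := by ring
      rw [e]; exact h3
    have habs : |((∑ i, nv x i * σf i x) - g x) ^ 2 - ((∑ i, nv x i * σf' i x) - g x) ^ 2|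
        = |(((∑ i, nv x i * σf i x) - g x) + ((∑ i, nv x i * σf' i x) - g x))|
          * |(((∑ i, nv x i * σf i x) - g x) - ((∑ i, nv x i * σf' i x) - g x))| := by
      rw [← abs_mul]; congr 1; ring
    rw [habs]
    calc _ ≤ (2 * (Real.sqrt d * S + cg)) * (Real.sqrt d * D) :=
          mul_le_mul hsum hdiff (abs_nonneg _) (by positivity)
      _ = (4 * (Real.sqrt ↑d * Rσ * ((Wσ:ℝ) + 1) + cg) *
            (Real.sqrt ↑d * ((m + 1 : ℕ) : ℝ) * Rσ ^ (m + 1 - 1) * (Wσ:ℝ) ^ (m + 1))) * εκ := by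
          simp only [Nat.add_sub_cancel, hSdef, hDdef]
          push_cast
          ring
end
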